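/- Let w be an element of the free group on x1,...,xn whose exponent sums of x_i and x_j are both zero. Then the coefficient of h_i h_j in the Magnus expansion of any cyclic permutation (conjugate) of w equals the coefficient of h_i h_j in the Magnus expansion of w. -/

import Mathlib

/-!
Truncated in degree two, the Magnus expansion of a product satisfies
`c₁(ab) = c₁(a) + c₁(b)` and `c₂ᵢⱼ(ab) = c₂ᵢⱼ(a) + c₂ᵢⱼ(b) + c₁ᵢ(a) c₁ⱼ(b)`, and the linear
coefficients are the exponent sums. Expanding `g w g⁻¹` and using `g g⁻¹ = 1` gives
`c₂ᵢⱼ(g w g⁻¹) = c₂ᵢⱼ(w) + c₁ᵢ(g) c₁ⱼ(w) - c₁ᵢ(w) c₁ⱼ(g)`, whose correction term vanishes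
when the exponent sums of `x i` and `x j` in `w` are zero.
-/

/-- The degree `≤ 2` truncation of the ring of formal power series in the
noncommuting variables `h 0, ..., h (n-1)` over `ℤ`: `c0` is the constant
coefficient, `c1 i` the coefficient of `h i`, and `c2 i j` the coefficient of
the monomial `h i * h j`. -/
structure Trunc2 (n : ℕ) where
  c0 : ℤ
  c1 : Fin n → ℤ
  c2 : Fin n → Fin n → ℤ

namespace Trunc2

variable {n : ℕ}

@[ext] theorem ext {a b : Trunc2 n} (h0 : a.c0 = b.c0) (h1 : ∀ i, a.c1 i = b.c1 i)
    (h2 : ∀ i j, a.c2 i j = b.c2 i j) : a = b := by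
  cases a; cases b
  simp only [mk.injEq]
  exact ⟨h0, funext h1, funext fun i => funext (h2 i)⟩

instance : One (Trunc2 n) := ⟨⟨1, 0, 0⟩⟩

/-- Multiplication of truncated noncommutative power series. -/
instance : Mul (Trunc2 n) :=
  ⟨fun a b => ⟨a.c0 * b.c0,
    fun i => a.c0 * b.c1 i + b.c0 * a.c1 i,
    fun i j => a.c0 * b.c2 i j + b.c0 * a.c2 i j + a.c1 i * b.c1 j⟩⟩

@[simp] theorem one_c0 : (1 : Trunc2 n).c0 = 1 := rfl
@[simp] theorem one_c1 (i : Fin n) : (1 : Trunc2 n).c1 i = 0 := rfl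
@[simp] theorem one_c2 (i j : Fin n) : (1 : Trunc2 n).c2 i j = 0 := rfl
@[simp] theorem mul_c0 (a b : Trunc2 n) : (a * b).c0 = a.c0 * b.c0 := rfl
@[simp] theorem mul_c1 (a b : Trunc2 n) (i : Fin n) :
    (a * b).c1 i = a.c0 * b.c1 i + b.c0 * a.c1 i := rfl
@[simp] theorem mul_c2 (a b : Trunc2 n) (i j : Fin n) :
    (a * b).c2 i j = a.c0 * b.c2 i j + b.c0 * a.c2 i j + a.c1 i * b.c1 j := rfl

instance : Monoid (Trunc2 n) where
  mul_assoc a b c := by ext <;> simp <;> ring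
  one_mul a := by ext <;> simp
  mul_one a := by ext <;> simp

/-- The (truncated) Magnus image `1 + h k` of the generator `x k`, together with
its inverse `1 - h k + h k * h k`. -/
def gen (k : Fin n) : (Trunc2 n)ˣ where
  val := ⟨1, (Pi.single k 1 : Fin n → ℤ), 0⟩
  inv := ⟨1, -(Pi.single k 1 : Fin n → ℤ),
    fun i j => (Pi.single k 1 : Fin n → ℤ) i * (Pi.single k 1 : Fin n → ℤ) j⟩
  val_inv := by ext <;> simp
  inv_val := by ext <;> simp

/-- The Magnus expansion (truncated in degree `≤ 2`): the homomorphism from the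
free group on `x 0, ..., x (n-1)` determined by `x k ↦ 1 + h k`
(so `(x k)⁻¹ ↦ 1 - h k + h k ^ 2 - ⋯`). -/
noncomputable def magnus : FreeGroup (Fin n) →* (Trunc2 n)ˣ := FreeGroup.lift gen

/-- The coefficient of `h i` in the Magnus expansion of `w`. -/
noncomputable def magnusCoeff1 (i : Fin n) (w : FreeGroup (Fin n)) : ℤ :=
  ((magnus w : (Trunc2 n)ˣ) : Trunc2 n).c1 i

/-- The coefficient of the monomial `h i * h j` in the Magnus expansion of `w`. -/
noncomputable def magnusCoeff2 (i j : Fin n) (w : FreeGroup (Fin n)) : ℤ :=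
  ((magnus w : (Trunc2 n)ˣ) : Trunc2 n).c2 i j

end Trunc2

open Trunc2 FreeGroup

/-- The exponent sum of the generator `x i` in a word of the free group,
i.e. the `i`-th coordinate of the image of the word under the abelianization
map to `ℤ^n`. -/
noncomputable def expSum {n : ℕ} (i : Fin n) : FreeGroup (Fin n) →* Multiplicative ℤ :=
  FreeGroup.lift (fun j => Multiplicative.ofAdd (if j = i then (1 : ℤ) else 0))

namespace Trunc2

variable {n : ℕ}

theorem magnus_of (k : Fin n) : magnus (FreeGroup.of k) = gen k :=
  FreeGroup.lift_apply_of

theorem magnus_c0 (w : FreeGroup (Fin n)) : ((magnus w : (Trunc2 n)ˣ) : Trunc2 n).c0 = 1 := by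
  induction w using FreeGroup.induction_on with
  | C1 => simp
  | of k => rw [magnus_of]; rfl
  | inv_of k _ => rw [_root_.map_inv, magnus_of]; rfl
  | mul x y ihx ihy => rw [_root_.map_mul, Units.val_mul, mul_c0, ihx, ihy, mul_one]

variable (i j : Fin n)

@[simp] theorem magnusCoeff1_one : magnusCoeff1 i (1 : FreeGroup (Fin n)) = 0 := by
  simp [magnusCoeff1]

@[simp] theorem magnusCoeff2_one : magnusCoeff2 i j (1 : FreeGroup (Fin n)) = 0 := by
  simp [magnusCoeff2]

theorem magnusCoeff1_mul (a b : FreeGroup (Fin n)) :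
    magnusCoeff1 i (a * b) = magnusCoeff1 i a + magnusCoeff1 i b := by
  simp only [magnusCoeff1, _root_.map_mul, Units.val_mul, mul_c1, magnus_c0, one_mul, add_comm]

theorem magnusCoeff2_mul (a b : FreeGroup (Fin n)) :
    magnusCoeff2 i j (a * b) =
      magnusCoeff2 i j a + magnusCoeff2 i j b + magnusCoeff1 i a * magnusCoeff1 j b := by
  simp only [magnusCoeff2, magnusCoeff1, _root_.map_mul, Units.val_mul, mul_c2, magnus_c0, one_mul,
    add_comm (((magnus b : (Trunc2 n)ˣ) : Trunc2 n).c2 i j)]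

theorem magnusCoeff1_inv (g : FreeGroup (Fin n)) :
    magnusCoeff1 i g⁻¹ = -magnusCoeff1 i g := by
  have h := magnusCoeff1_mul i g g⁻¹
  rw [mul_inv_cancel, magnusCoeff1_one] at h
  omega

theorem magnusCoeff2_inv (g : FreeGroup (Fin n)) :
    magnusCoeff2 i j g⁻¹ = magnusCoeff1 i g * magnusCoeff1 j g - magnusCoeff2 i j g := by
  have h := magnusCoeff2_mul i j g g⁻¹
  rw [mul_inv_cancel, magnusCoeff2_one, magnusCoeff1_inv] at h
  linarith

theorem magnusCoeff1_eq_expSum (w : FreeGroup (Fin n)) :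
    magnusCoeff1 i w = Multiplicative.toAdd (expSum i w) := by
  induction w using FreeGroup.induction_on with
  | C1 => simp
  | of k =>
    rw [magnusCoeff1, magnus_of, expSum, FreeGroup.lift_apply_of]
    change (Pi.single k 1 : Fin n → ℤ) i = _
    simp [Pi.single_apply, eq_comm]
  | inv_of k ih => rw [magnusCoeff1_inv, _root_.map_inv, toAdd_inv, ih]
  | mul x y ihx ihy => rw [magnusCoeff1_mul, _root_.map_mul, toAdd_mul, ihx, ihy]

theorem magnusCoeff2_conj (g w : FreeGroup (Fin n)) :
    magnusCoeff2 i j (g * w * g⁻¹) =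
      magnusCoeff2 i j w + magnusCoeff1 i g * magnusCoeff1 j w -
        magnusCoeff1 i w * magnusCoeff1 j g := by
  rw [magnusCoeff2_mul, magnusCoeff2_mul, magnusCoeff2_inv, magnusCoeff1_mul, magnusCoeff1_inv]
  ring

end Trunc2

/-- if the exponent sums of `x i` and `x j` in `w` both vanish,
then the coefficient of `h i * h j` in the Magnus expansion of any conjugate
(cyclic permutation) of `w` equals that of `w`. -/
theorem magnusCoeff2_conj_of_expSum_zero {n : ℕ} (i j : Fin n)
    (w : FreeGroup (Fin n))
    (hi : Multiplicative.toAdd (expSum i w) = 0)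
    (hj : Multiplicative.toAdd (expSum j w) = 0)
    (g : FreeGroup (Fin n)) :
    magnusCoeff2 i j (g * w * g⁻¹) = magnusCoeff2 i j w := by
  rw [magnusCoeff2_conj, magnusCoeff1_eq_expSum i w, magnusCoeff1_eq_expSum j w, hi, hj]
  ring
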